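/- Let 0 < ε ≤ ρ²/2 and ℓ ≥ 16, and let G = (V,E) be a graph on n vertices (with ρn a positive integer) that is ε-far from having a ρn independent set. Let J ⊆ V be a nonempty set such that G[J] has fewer than (ε/(ℓρ²))·|J|² edges, and let C, D ⊆ V satisfy C ⊆ D, |E(C)| ≤ εn²/4, and |D| ≥ ρn. Suppose that for some r > √ℓ/(16·log(8ρ/ε)) we have |C| ≥ (1 − √ℓ/(16·r·log(8ρ/ε)))·ρn and MRR_G(J,D) ≤ r·(|D| − (1 − √ℓ/(16·r·log(8ρ/ε)))·ρn)/|J|. Then for every Y ⊆ C with |Y| = (1 − √ℓ/(16·r·log(8ρ/ε)))·ρn, the induced subgraph G[D \ Y] has at most (64·(log(8ρ/ε))²·ε·r²/(ℓρ²))·|D \ Y|² edges. -/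

import Mathlib

open Finset

variable {V : Type*}

/-- Number of edges of `G` with both endpoints in `S` (i.e. edges of the induced subgraph `G[S]`). -/
noncomputable def edgesIn (G : SimpleGraph V) (S : Finset V) : ℕ :=
  {e ∈ G.edgeSet | ∀ v ∈ e, v ∈ S}.ncard

/-- Number of edges of `G` with one endpoint in `S` and one endpoint in `T`. -/
noncomputable def edgesBetween (G : SimpleGraph V) (S T : Finset V) : ℕ :=
  {e : Sym2 V | e ∈ G.edgeSet ∧ ∃ u v, e = s(u, v) ∧ u ∈ S ∧ v ∈ T}.ncard

/-- Degree of `v` in the induced subgraph `G[S]`, i.e. `|N(v) ∩ S|`. -/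
noncomputable def degIn (G : SimpleGraph V) (S : Finset V) (v : V) : ℕ :=
  ((S : Set V) ∩ G.neighborSet v).ncard

/-- `S_{↑v}`: the vertices of `S` with strictly more neighbours in `S` than `v` has. -/
def upSet (G : SimpleGraph V) (S : Finset V) (v : V) : Set V :=
  {u | u ∈ S ∧ degIn G S v < degIn G S u}

/-- The maximum removal ratio `MRR_G(J, C)` with parameters `ε, ρ, ℓ`. -/
noncomputable def MRR [DecidableEq V] (G : SimpleGraph V) (ε ρ ℓ : ℝ) (J C : Finset V) : ℝ :=
  sSup {x : ℝ | ∃ v ∈ J, x = max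
    ((degIn G (insert v C) v : ℝ) /
      max (degIn G J v : ℝ) (ε / (Real.sqrt ℓ * ρ ^ 2) * J.card))
    (((upSet G C v).ncard : ℝ) /
      max (((upSet G C v) ∩ (J : Set V)).ncard : ℝ) (ε / (Real.sqrt ℓ * ρ ^ 2) * J.card))}

/-- `G` is `ε`-far from having a `ρn` independent set: every set of `ρn` vertices
spans at least `ε n²` edges. -/
def FarFrom (G : SimpleGraph V) [Fintype V] (ρ ε : ℝ) : Prop :=
  ∀ U : Finset V, (U.card : ℝ) = ρ * Fintype.card V →
    ε * (Fintype.card V : ℝ) ^ 2 ≤ (edgesIn G U : ℝ)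

/-!
Put `m = |D \ Y|`, `K = r m / |J|` and `β = ε |J| / (√ℓ ρ²)`. As `|D| - |Y| = m`, the MRR
hypothesis says that every `v ∈ J` has `deg_D v ≤ K max(deg_J v, β)` and
`|D_{↑v}| ≤ K max(|D_{↑v} ∩ J|, β)`, and sparsity of `G[J]` provides some `v ∈ J` with
`deg_D v ≤ K β`. Fix a threshold `t ≥ K β`. A vertex of `J` of `D`-degree above `t` has
`t < K deg_J`, so by Markov there are at most `2 K e(J) / t` of them. If `w ∈ J` has the largest
`D`-degree not exceeding `t`, every vertex of `D` of degree above `t` lies in `D_{↑w}`, while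
`D_{↑w} ∩ J` only contains vertices of `J` of degree above `t`; hence
`#{u ∈ D | deg_D u > t} · t ≤ 2 K² e(J) + K β t`. Summing this over the dyadic thresholds
`2^i K β < m`, of which there are at most `2 log(8ρ/ε)`, bounds
`2 e(D \ Y) ≤ ∑_{u ∈ D \ Y} min(m, deg_D u)` by `O(log(8ρ/ε) · ε r² m² / (ℓ ρ²))`.
-/

lemma edgesIn_eq_ncard_edgeSet_induce (G : SimpleGraph V) (S : Finset V) :
    edgesIn G S = (G.induce (S : Set V)).edgeSet.ncard := by
  have himage : {e ∈ G.edgeSet | ∀ v ∈ e, v ∈ S} =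
      Sym2.map Subtype.val '' (G.induce (S : Set V)).edgeSet := by
    ext e
    induction e using Sym2.ind with
    | _ x y =>
      simp only [Set.mem_ofPred_eq, SimpleGraph.mem_edgeSet, Sym2.mem_iff, forall_eq_or_imp,
        forall_eq, SetLike.coe_sort_coe, Set.mem_image, Sym2.exists, SimpleGraph.comap_adj,
        Function.Embedding.subtype_apply, Sym2.map_mk, Sym2.eq, Sym2.rel_iff', Prod.mk.injEq,
        Prod.swap_prod_mk, Subtype.exists, exists_and_left, exists_prop]
      grind [SimpleGraph.adj_comm]
  rw [edgesIn, himage, Set.ncard_image_of_injective _ (Sym2.map.injective Subtype.val_injective)]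

lemma degIn_eq_ncard_neighborSet_induce (G : SimpleGraph V) (S : Finset V) (x : (S : Set V)) :
    degIn G S x = ((G.induce (S : Set V)).neighborSet x).ncard := by
  have himage : Subtype.val '' (G.induce (S : Set V)).neighborSet x =
      (S : Set V) ∩ G.neighborSet x := by
    ext u
    simp only [SetLike.coe_sort_coe, Set.mem_image, SimpleGraph.mem_neighborSet,
      SimpleGraph.comap_adj, Function.Embedding.subtype_apply, Subtype.exists, exists_and_left,
      exists_prop, exists_eq_right_right, Set.mem_inter_iff, SetLike.mem_coe]
    grind
  rw [degIn, ← himage, Set.ncard_image_of_injective _ Subtype.val_injective]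

theorem sum_degIn_eq_two_mul_edgesIn (G : SimpleGraph V) (S : Finset V) :
    ∑ v ∈ S, degIn G S v = 2 * edgesIn G S := by
  classical
  calc ∑ v ∈ S, degIn G S v = ∑ x : (S : Set V), (G.induce (S : Set V)).degree x := by
        rw [← Finset.sum_coe_sort]
        refine Fintype.sum_congr _ _ fun x => ?_
        rw [degIn_eq_ncard_neighborSet_induce, ← SimpleGraph.card_neighborSet_eq_degree,
          ← Nat.card_coe_set_eq, Nat.card_eq_fintype_card]
    _ = 2 * edgesIn G S := by
        rw [SimpleGraph.sum_degrees_eq_twice_card_edges, edgesIn_eq_ncard_edgeSet_induce,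
          ← SimpleGraph.coe_edgeFinset, Set.ncard_coe_finset]

lemma degIn_mono (G : SimpleGraph V) {S T : Finset V} (h : S ⊆ T) (v : V) :
    degIn G S v ≤ degIn G T v :=
  Set.ncard_le_ncard (Set.inter_subset_inter_left _ (coe_subset.mpr h))
    (T.finite_toSet.inter_of_left _)

lemma degIn_le_card (G : SimpleGraph V) (S : Finset V) (v : V) : degIn G S v ≤ #S := by
  rw [← Set.ncard_coe_finset S]
  exact Set.ncard_le_ncard Set.inter_subset_left S.finite_toSet

lemma degIn_insert_self [DecidableEq V] (G : SimpleGraph V) (S : Finset V) (v : V) :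
    degIn G (insert v S) v = degIn G S v := by
  rw [degIn, coe_insert, Set.insert_inter_of_notMem G.notMem_neighborSet_self, degIn]

lemma min_two_pow_mul_le_add_sum (T d : ℝ) (hT : 0 ≤ T) (I : ℕ) :
    min (2 ^ I * T) d ≤ T + ∑ i ∈ range I, if 2 ^ i * T < d then 2 ^ i * T else 0 := by
  induction I with
  | zero => simp
  | succ I ih =>
    rw [sum_range_succ]
    split_ifs with h
    · rw [min_eq_left h.le] at ih
      have hdouble : (2 : ℝ) ^ (I + 1) * T = 2 ^ I * T + 2 ^ I * T := by ring
      linarith [min_le_left (2 ^ (I + 1) * T) d]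
    · have hd : d ≤ 2 ^ I * T := not_lt.mp h
      have hd' : d ≤ 2 ^ (I + 1) * T := by
        rw [pow_succ]; nlinarith [pow_nonneg (zero_le_two (α := ℝ)) I]
      rw [min_eq_right hd] at ih
      rwa [min_eq_right hd', add_zero]

lemma sum_min_le_of_card_filter_mul_le {ι : Type*} (S : Finset ι) (g : ι → ℝ) {T Q : ℝ}
    (hT : 0 ≤ T) (hcount : ∀ t, T ≤ t → #{u ∈ S | t < g u} * t ≤ Q + T * t) (I : ℕ) :
    ∑ u ∈ S, min (2 ^ I * T) (g u) ≤ #S * T + I * Q + T ^ 2 * (2 ^ I - 1) := by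
  have hlevel (i : ℕ) :
      ∑ u ∈ S, (if 2 ^ i * T < g u then 2 ^ i * T else 0) ≤ Q + T * (2 ^ i * T) := by
    rw [← sum_filter, sum_const, nsmul_eq_mul]
    exact hcount _ (le_mul_of_one_le_left hT (one_le_pow₀ one_le_two))
  have hgeom : ∑ i ∈ range I, (2 : ℝ) ^ i = 2 ^ I - 1 := by
    rw [geom_sum_eq] <;> norm_num
  calc ∑ u ∈ S, min (2 ^ I * T) (g u)
      ≤ ∑ u ∈ S, (T + ∑ i ∈ range I, if 2 ^ i * T < g u then 2 ^ i * T else 0) :=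
        sum_le_sum fun u _ => min_two_pow_mul_le_add_sum T (g u) hT I
    _ = #S * T + ∑ i ∈ range I, ∑ u ∈ S, if 2 ^ i * T < g u then 2 ^ i * T else 0 := by
        rw [sum_add_distrib, sum_const, nsmul_eq_mul, sum_comm]
    _ ≤ #S * T + ∑ i ∈ range I, (Q + T ^ 2 * 2 ^ i) := by
        gcongr with i
        linarith [hlevel i]
    _ = #S * T + I * Q + T ^ 2 * (2 ^ I - 1) := by
        rw [sum_add_distrib, sum_const, card_range, nsmul_eq_mul, ← mul_sum, hgeom, add_assoc]

lemma exists_dyadic_scale {c M : ℝ} (hc : 0 < c) (hM : 0 ≤ M) (hcM : 2 / c ≤ 2 ^ M) :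
    ∃ I : ℕ, 1 ≤ 2 ^ I * c ∧ (2 ^ I - 1) * c ≤ 2 ∧ (I : ℝ) ≤ M := by
  rcases le_or_gt 1 c with h1 | h1
  · exact ⟨0, by simpa using h1, by simp, by simpa using hM⟩
  obtain ⟨k, hk, hk'⟩ := exists_nat_pow_near (one_le_one_div hc h1.le) one_lt_two
  rw [le_div_iff₀ hc] at hk
  rw [div_lt_iff₀ hc] at hk'
  refine ⟨k + 1, hk'.le, by nlinarith [pow_succ (2 : ℝ) k], ?_⟩
  have h2k : (2 : ℝ) ^ ((k + 1 : ℕ) : ℝ) ≤ 2 ^ M := by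
    refine le_trans ?_ hcM
    rw [Real.rpow_natCast, pow_succ, le_div_iff₀ hc]
    nlinarith
  exact_mod_cast (Real.rpow_le_rpow_left_iff one_lt_two).mp h2k

lemma four_mul_le_two_rpow {L : ℝ} (hL : 4 ≤ L) : 4 * L ≤ 2 ^ L := by
  have hexp : 1 + (L - 4) / 2 ≤ (2 : ℝ) ^ (L - 4) := by
    rw [Real.rpow_def_of_pos two_pos]
    nlinarith [Real.add_one_le_exp (Real.log 2 * (L - 4)), Real.log_two_gt_d9]
  have hsplit : (2 : ℝ) ^ L = 2 ^ (4 : ℝ) * 2 ^ (L - 4) := by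
    rw [← Real.rpow_add two_pos]; ring_nf
  rw [hsplit]
  norm_num
  linarith

lemma four_le_logb {ε ρ : ℝ} (hε : 0 < ε) (hρ : 0 < ρ) (hρ1 : ρ ≤ 1) (hερ : ε ≤ ρ ^ 2 / 2) :
    4 ≤ Real.logb 2 (8 * ρ / ε) := by
  rw [Real.le_logb_iff_rpow_le one_lt_two (by positivity), le_div_iff₀ hε]
  norm_num
  nlinarith

lemma two_div_le_two_rpow_two_mul_logb {ε ρ ℓ r : ℝ} (hε : 0 < ε) (hρ : 0 < ρ) (hρ1 : ρ ≤ 1)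
    (hερ : ε ≤ ρ ^ 2 / 2) (hℓ : 0 < ℓ)
    (hr : Real.sqrt ℓ < 16 * Real.logb 2 (8 * ρ / ε) * r) :
    2 / (ε / (Real.sqrt ℓ * ρ ^ 2) * r) ≤ 2 ^ (2 * Real.logb 2 (8 * ρ / ε)) := by
  set L := Real.logb 2 (8 * ρ / ε)
  have hL : 4 ≤ L := four_le_logb hε hρ hρ1 hερ
  have h2L : (2 : ℝ) ^ L = 8 * ρ / ε := Real.rpow_logb two_pos one_lt_two.ne' (by positivity)
  have hsqrt : 0 < Real.sqrt ℓ := Real.sqrt_pos.mpr hℓ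
  have hc : ε / (16 * L * ρ ^ 2) < ε / (Real.sqrt ℓ * ρ ^ 2) * r := by
    rw [div_mul_eq_mul_div, div_lt_div_iff₀ (by positivity) (by positivity)]
    have := mul_lt_mul_of_pos_left hr (by positivity : 0 < ε * ρ ^ 2)
    nlinarith
  rw [div_le_iff₀ ((by positivity : (0 : ℝ) < ε / (16 * L * ρ ^ 2)).trans hc), two_mul,
    Real.rpow_add two_pos, h2L]
  have h4L : 4 * L ≤ 8 * ρ / ε := h2L ▸ four_mul_le_two_rpow hL
  calc (2 : ℝ) ≤ 2 / ρ := le_div_self zero_le_two hρ hρ1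
    _ = 4 * L * (8 * ρ / ε) * (ε / (16 * L * ρ ^ 2)) := by field_simp; ring
    _ ≤ 8 * ρ / ε * (8 * ρ / ε) * (ε / (Real.sqrt ℓ * ρ ^ 2) * r) := by gcongr

section MRR

variable [DecidableEq V] (G : SimpleGraph V) {ε ρ ℓ K : ℝ} {J D : Finset V} {v : V}

lemma le_MRR (hv : v ∈ J) :
    max ((degIn G (insert v D) v : ℝ) /
        max (degIn G J v : ℝ) (ε / (Real.sqrt ℓ * ρ ^ 2) * #J))
      (((upSet G D v).ncard : ℝ) /
        max (((upSet G D v) ∩ (J : Set V)).ncard : ℝ) (ε / (Real.sqrt ℓ * ρ ^ 2) * #J))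
      ≤ MRR G ε ρ ℓ J D := by
  refine le_csSup (Set.Finite.bddAbove ?_) ⟨v, hv, rfl⟩
  exact (J.finite_toSet.image _).subset fun x ⟨w, hw, hx⟩ => ⟨w, hw, hx.symm⟩

lemma degIn_le_of_MRR_le (hMRR : MRR G ε ρ ℓ J D ≤ K)
    (hpos : 0 < ε / (Real.sqrt ℓ * ρ ^ 2) * #J) (hv : v ∈ J) :
    (degIn G D v : ℝ) ≤ K * max (degIn G J v : ℝ) (ε / (Real.sqrt ℓ * ρ ^ 2) * #J) := by
  have h := (le_max_left _ _).trans ((le_MRR G hv).trans hMRR)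
  rwa [degIn_insert_self, div_le_iff₀ (lt_max_of_lt_right hpos)] at h

lemma ncard_upSet_le_of_MRR_le (hMRR : MRR G ε ρ ℓ J D ≤ K)
    (hpos : 0 < ε / (Real.sqrt ℓ * ρ ^ 2) * #J) (hv : v ∈ J) :
    ((upSet G D v).ncard : ℝ) ≤
      K * max (((upSet G D v) ∩ (J : Set V)).ncard : ℝ) (ε / (Real.sqrt ℓ * ρ ^ 2) * #J) := by
  have h := (le_max_right _ _).trans ((le_MRR G hv).trans hMRR)
  rwa [div_le_iff₀ (lt_max_of_lt_right hpos)] at h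

end MRR

section Counting

variable {G : SimpleGraph V} {J D : Finset V} {K β t : ℝ}

lemma card_filter_mul_le_of_degIn_le (hK : 0 ≤ K)
    (hdeg : ∀ v ∈ J, (degIn G D v : ℝ) ≤ K * max (degIn G J v : ℝ) β) (ht : K * β ≤ t) :
    #{u ∈ J | t < (degIn G D u : ℝ)} * t ≤ K * ∑ u ∈ J, (degIn G J u : ℝ) := by
  have hheavy : ∀ u ∈ {u ∈ J | t < (degIn G D u : ℝ)}, t ≤ K * degIn G J u := by
    intro u hu
    rw [mem_filter] at hu
    have h := hu.2.trans_le (hdeg u hu.1)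
    rw [mul_max_of_nonneg _ _ hK, lt_max_iff] at h
    exact h.resolve_right ht.not_gt |>.le
  calc #{u ∈ J | t < (degIn G D u : ℝ)} * t
      = ∑ _u ∈ {u ∈ J | t < (degIn G D u : ℝ)}, t := by rw [sum_const, nsmul_eq_mul]
    _ ≤ ∑ u ∈ {u ∈ J | t < (degIn G D u : ℝ)}, K * degIn G J u := sum_le_sum hheavy
    _ ≤ ∑ u ∈ J, K * degIn G J u :=
        sum_le_sum_of_subset_of_nonneg (filter_subset _ _) fun _ _ _ => by positivity
    _ = K * ∑ u ∈ J, (degIn G J u : ℝ) := (mul_sum _ _ _).symm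

lemma card_filter_le_of_ncard_upSet_le {w : V} (hK : 0 ≤ K) (hβ : 0 ≤ β)
    (hup : ((upSet G D w).ncard : ℝ) ≤ K * max (((upSet G D w) ∩ (J : Set V)).ncard : ℝ) β)
    (hwt : (degIn G D w : ℝ) ≤ t)
    (hwmax : ∀ u ∈ J, (degIn G D u : ℝ) ≤ t → degIn G D u ≤ degIn G D w) :
    (#{u ∈ D | t < (degIn G D u : ℝ)} : ℝ) ≤ K * (#{u ∈ J | t < (degIn G D u : ℝ)} + β) := by
  have hheavy : (({u ∈ D | t < (degIn G D u : ℝ)} : Finset V) : Set V) ⊆ upSet G D w := by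
    intro u hu
    rw [coe_filter] at hu
    exact ⟨hu.1, by exact_mod_cast hwt.trans_lt hu.2⟩
  have hupJ :
      upSet G D w ∩ (J : Set V) ⊆ (({u ∈ J | t < (degIn G D u : ℝ)} : Finset V) : Set V) := by
    rintro u ⟨⟨-, hlt⟩, huJ⟩
    rw [coe_filter]
    refine ⟨huJ, lt_of_not_ge fun hle => ?_⟩
    exact (hwmax u huJ hle).not_gt hlt
  have hD : (#{u ∈ D | t < (degIn G D u : ℝ)} : ℝ) ≤ (upSet G D w).ncard := by
    rw [← Set.ncard_coe_finset]
    exact_mod_cast Set.ncard_le_ncard hheavy ((D.finite_toSet).subset fun u hu => hu.1)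
  have hJ : ((upSet G D w ∩ (J : Set V)).ncard : ℝ) ≤ #{u ∈ J | t < (degIn G D u : ℝ)} := by
    rw [← Set.ncard_coe_finset]
    exact_mod_cast Set.ncard_le_ncard hupJ (finite_toSet _)
  refine hD.trans (hup.trans (mul_le_mul_of_nonneg_left (max_le ?_ ?_) hK))
  · linarith
  · linarith [(#{u ∈ J | t < (degIn G D u : ℝ)} : ℕ).cast_nonneg (α := ℝ)]

lemma card_filter_mul_le_of_bounds (hK : 0 ≤ K) (hβ : 0 ≤ β)
    (hdeg : ∀ v ∈ J, (degIn G D v : ℝ) ≤ K * max (degIn G J v : ℝ) β)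
    (hup : ∀ v ∈ J,
      ((upSet G D v).ncard : ℝ) ≤ K * max (((upSet G D v) ∩ (J : Set V)).ncard : ℝ) β)
    (ht : K * β ≤ t) (hlow : ∃ v ∈ J, (degIn G D v : ℝ) ≤ t) :
    #{u ∈ D | t < (degIn G D u : ℝ)} * t ≤ K ^ 2 * ∑ u ∈ J, (degIn G J u : ℝ) + K * β * t := by
  obtain ⟨v, hv, hvt⟩ := hlow
  obtain ⟨w, hw, hwmax⟩ := exists_max_image {v ∈ J | (degIn G D v : ℝ) ≤ t} (degIn G D)
    ⟨v, mem_filter.mpr ⟨hv, hvt⟩⟩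
  rw [mem_filter] at hw
  have hcard := card_filter_le_of_ncard_upSet_le hK hβ (hup w hw.1) hw.2
    fun u hu hut => hwmax u (mem_filter.mpr ⟨hu, hut⟩)
  have hmarkov := card_filter_mul_le_of_degIn_le hK hdeg ht
  have ht0 : 0 ≤ t := (mul_nonneg hK hβ).trans ht
  calc #{u ∈ D | t < (degIn G D u : ℝ)} * t
      ≤ K * (#{u ∈ J | t < (degIn G D u : ℝ)} + β) * t := mul_le_mul_of_nonneg_right hcard ht0
    _ = K * (#{u ∈ J | t < (degIn G D u : ℝ)} * t) + K * β * t := by ring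
    _ ≤ K * (K * ∑ u ∈ J, (degIn G J u : ℝ)) + K * β * t := by gcongr
    _ = K ^ 2 * ∑ u ∈ J, (degIn G J u : ℝ) + K * β * t := by ring

theorem two_mul_edgesIn_le_of_bounds {S : Finset V} {I : ℕ} (hS : S ⊆ D) (hJ : J.Nonempty)
    (hK : 0 ≤ K) (hβ : 0 ≤ β)
    (hdeg : ∀ v ∈ J, (degIn G D v : ℝ) ≤ K * max (degIn G J v : ℝ) β)
    (hup : ∀ v ∈ J,
      ((upSet G D v).ncard : ℝ) ≤ K * max (((upSet G D v) ∩ (J : Set V)).ncard : ℝ) β)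
    (hsparse : 2 * (edgesIn G J : ℝ) ≤ #J * β) (hI : (#S : ℝ) ≤ 2 ^ I * (K * β)) :
    2 * (edgesIn G S : ℝ) ≤
      #S * (K * β) + I * (K ^ 2 * (2 * edgesIn G J)) + (K * β) ^ 2 * (2 ^ I - 1) := by
  have hsumJ : ∑ u ∈ J, (degIn G J u : ℝ) = 2 * edgesIn G J := by
    exact_mod_cast sum_degIn_eq_two_mul_edgesIn G J
  obtain ⟨v, hv, hvβ⟩ : ∃ v ∈ J, (degIn G J v : ℝ) ≤ β :=
    exists_le_of_sum_le hJ (by rwa [hsumJ, sum_const, nsmul_eq_mul])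
  have hvK : (degIn G D v : ℝ) ≤ K * β := by simpa [max_eq_right hvβ] using hdeg v hv
  have hcount (t : ℝ) (ht : K * β ≤ t) :
      #{u ∈ S | t < (degIn G D u : ℝ)} * t ≤ K ^ 2 * (2 * edgesIn G J) + K * β * t := by
    have hsub : (#{u ∈ S | t < (degIn G D u : ℝ)} : ℝ) ≤ #{u ∈ D | t < (degIn G D u : ℝ)} := by
      exact_mod_cast card_le_card (filter_subset_filter _ hS)
    have hD := card_filter_mul_le_of_bounds hK hβ hdeg hup ht ⟨v, hv, hvK.trans ht⟩
    rw [hsumJ] at hD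
    exact (mul_le_mul_of_nonneg_right hsub ((mul_nonneg hK hβ).trans ht)).trans hD
  calc 2 * (edgesIn G S : ℝ) = ∑ u ∈ S, (degIn G S u : ℝ) := by
        exact_mod_cast (sum_degIn_eq_two_mul_edgesIn G S).symm
    _ ≤ ∑ u ∈ S, min (2 ^ I * (K * β)) (degIn G D u : ℝ) := by
        refine sum_le_sum fun u _ => le_min ?_ ?_
        · exact (Nat.cast_le.mpr (degIn_le_card G S u)).trans hI
        · exact_mod_cast degIn_mono G hS u
    _ ≤ _ := sum_min_le_of_card_filter_mul_le S _ (mul_nonneg hK hβ) hcount I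

end Counting

theorem two_mul_edgesIn_le_of_MRR_le [DecidableEq V] (G : SimpleGraph V) {ε ρ ℓ r : ℝ}
    {J D S : Finset V} {I : ℕ} (hS : S ⊆ D) (hJ : J.Nonempty) (hε : 0 < ε) (hρ : 0 < ρ)
    (hℓ : 4 ≤ ℓ) (hr : 0 ≤ r) (hsparse : (edgesIn G J : ℝ) < ε / (ℓ * ρ ^ 2) * #J ^ 2)
    (hMRR : MRR G ε ρ ℓ J D ≤ r * #S / #J) (hI : 1 ≤ 2 ^ I * (ε / (Real.sqrt ℓ * ρ ^ 2) * r)) :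
    2 * (edgesIn G S : ℝ) ≤
      (1 + (2 ^ I - 1) * (ε / (Real.sqrt ℓ * ρ ^ 2) * r)) * (ε / (Real.sqrt ℓ * ρ ^ 2) * r)
          * #S ^ 2 + I * (2 * (ε / (ℓ * ρ ^ 2) * r ^ 2 * #S ^ 2)) := by
  set a := ε / (Real.sqrt ℓ * ρ ^ 2)
  have hJ0 : (0 : ℝ) < #J := by exact_mod_cast hJ.card_pos
  have hsqrt : 2 ≤ Real.sqrt ℓ := Real.le_sqrt_of_sq_le (by linarith)
  have haℓ : ε / (ℓ * ρ ^ 2) = a / Real.sqrt ℓ := by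
    rw [div_div, mul_right_comm, Real.mul_self_sqrt (by linarith)]
  have hβ : 0 < a * #J := by positivity
  have hsparse' : 2 * (edgesIn G J : ℝ) ≤ #J * (a * #J) := by
    have : a / Real.sqrt ℓ ≤ a / 2 := div_le_div_of_nonneg_left (by positivity) two_pos hsqrt
    rw [haℓ] at hsparse
    nlinarith
  have hKβ : r * #S / #J * (a * #J) = a * r * #S := by field_simp
  have hedges := two_mul_edgesIn_le_of_bounds hS hJ (by positivity) hβ.le
    (fun v hv => degIn_le_of_MRR_le G hMRR hβ hv)
    (fun v hv => ncard_upSet_le_of_MRR_le G hMRR hβ hv) hsparse' (I := I)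
    (by rw [hKβ]; nlinarith [(#S).cast_nonneg (α := ℝ)])
  have hQ : (r * #S / #J) ^ 2 * (2 * edgesIn G J) ≤ 2 * (ε / (ℓ * ρ ^ 2) * r ^ 2 * #S ^ 2) := by
    calc (r * #S / #J) ^ 2 * (2 * edgesIn G J)
        ≤ (r * #S / #J) ^ 2 * (2 * (ε / (ℓ * ρ ^ 2) * #J ^ 2)) := by gcongr
      _ = 2 * (ε / (ℓ * ρ ^ 2) * r ^ 2 * #S ^ 2) := by field_simp
  rw [hKβ] at hedges
  calc 2 * (edgesIn G S : ℝ)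
      ≤ #S * (a * r * #S) + I * ((r * #S / #J) ^ 2 * (2 * edgesIn G J))
          + (a * r * #S) ^ 2 * (2 ^ I - 1) := hedges
    _ ≤ #S * (a * r * #S) + I * (2 * (ε / (ℓ * ρ ^ 2) * r ^ 2 * #S ^ 2))
          + (a * r * #S) ^ 2 * (2 ^ I - 1) := by gcongr
    _ = _ := by ring

theorem edgesIn_le_of_MRR_le [DecidableEq V] (G : SimpleGraph V) {ε ρ ℓ r L : ℝ}
    {J D S : Finset V} (hS : S ⊆ D) (hJ : J.Nonempty) (hε : 0 < ε) (hρ : 0 < ρ) (hℓ : 4 ≤ ℓ)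
    (hL : 1 ≤ L) (hr : Real.sqrt ℓ < 16 * L * r)
    (hscale : 2 / (ε / (Real.sqrt ℓ * ρ ^ 2) * r) ≤ 2 ^ (2 * L))
    (hsparse : (edgesIn G J : ℝ) < ε / (ℓ * ρ ^ 2) * #J ^ 2)
    (hMRR : MRR G ε ρ ℓ J D ≤ r * #S / #J) :
    (edgesIn G S : ℝ) ≤ 64 * L ^ 2 * ε * r ^ 2 / (ℓ * ρ ^ 2) * #S ^ 2 := by
  have hsqrt : 0 < Real.sqrt ℓ := Real.sqrt_pos.mpr (by linarith)
  have hr0 : 0 < r := pos_of_mul_pos_right (hsqrt.trans hr) (by linarith)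
  set c := ε / (Real.sqrt ℓ * ρ ^ 2) * r
  obtain ⟨I, hI1, hI2, hIL⟩ := exists_dyadic_scale (c := c) (by positivity) (by linarith) hscale
  have h2e := two_mul_edgesIn_le_of_MRR_le G hS hJ hε hρ hℓ hr0.le hsparse hMRR hI1
  set q := ε / (ℓ * ρ ^ 2) * r ^ 2 * #S ^ 2
  have hcq : c * #S ^ 2 ≤ 16 * L * q := by
    have hq : q = c * #S ^ 2 * (r / Real.sqrt ℓ) := by
      simp only [q, c]
      field_simp
      rw [Real.sq_sqrt (by linarith)]
      ring
    have hr' : 1 ≤ 16 * L * (r / Real.sqrt ℓ) := by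
      rw [mul_div_assoc', le_div_iff₀ hsqrt, one_mul]
      exact hr.le
    rw [hq]
    nlinarith [(by positivity : 0 ≤ c * #S ^ 2)]
  have hq : 64 * L ^ 2 * ε * r ^ 2 / (ℓ * ρ ^ 2) * #S ^ 2 = 64 * L ^ 2 * q := by
    simp only [q]
    ring
  rw [hq]
  nlinarith [(by positivity : 0 ≤ c * #S ^ 2), (by positivity : 0 ≤ q)]

theorem sparse_outside_revision_general [Fintype V] [DecidableEq V]
    (G : SimpleGraph V) (ε ρ ℓ r : ℝ) (n : ℕ)
    (hn : n = Fintype.card V) (hε : 0 < ε) (hερ : ε ≤ ρ ^ 2 / 2) (hℓ : ℓ ≥ 16)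
    (hρn : ∃ m : ℕ, 0 < m ∧ (m : ℝ) = ρ * n)
    (J : Finset V) (hJne : J.Nonempty)
    (hJ : (edgesIn G J : ℝ) < ε / (ℓ * ρ ^ 2) * (J.card : ℝ) ^ 2)
    (C D : Finset V) (hCD : C ⊆ D)
    (hD : (D.card : ℝ) ≥ ρ * n)
    (hr : r > Real.sqrt ℓ / (16 * Real.logb 2 (8 * ρ / ε)))
    (hMRR : MRR G ε ρ ℓ J D ≤
      r * ((D.card : ℝ) - (1 - Real.sqrt ℓ / (16 * r * Real.logb 2 (8 * ρ / ε))) * (ρ * n))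
        / J.card) :
    ∀ Y : Finset V, Y ⊆ C →
      (Y.card : ℝ) = (1 - Real.sqrt ℓ / (16 * r * Real.logb 2 (8 * ρ / ε))) * (ρ * n) →
      (edgesIn G (D \ Y) : ℝ) ≤
        64 * (Real.logb 2 (8 * ρ / ε)) ^ 2 * ε * r ^ 2 / (ℓ * ρ ^ 2) *
          ((D \ Y).card : ℝ) ^ 2 := by
  intro Y hYC hYcard
  obtain ⟨m, hm, hmρ⟩ := hρn
  have hρn0 : 0 < ρ * n := hmρ ▸ Nat.cast_pos.mpr hm
  have hρ : 0 < ρ := pos_of_mul_pos_left hρn0 n.cast_nonneg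
  have hρ1 : ρ ≤ 1 := by
    have hDn : (#D : ℝ) ≤ n := by rw [hn]; exact_mod_cast card_le_univ D
    nlinarith [pos_of_mul_pos_right hρn0 hρ.le]
  have hL := four_le_logb hε hρ hρ1 hερ
  have hr' : Real.sqrt ℓ < 16 * Real.logb 2 (8 * ρ / ε) * r := by
    rwa [gt_iff_lt, div_lt_iff₀ (by positivity), mul_comm] at hr
  have hYD : Y ⊆ D := hYC.trans hCD
  have hMRR' : MRR G ε ρ ℓ J D ≤ r * #(D \ Y) / #J := by
    rwa [card_sdiff_of_subset hYD, Nat.cast_sub (card_le_card hYD), hYcard]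
  exact edgesIn_le_of_MRR_le G sdiff_subset hJne hε hρ (by linarith) (by linarith) hr'
    (two_div_le_two_rpow_two_mul_logb hε hρ hρ1 hερ (by linarith) hr') hJ hMRR'

theorem sparse_outside_revision [Fintype V] [DecidableEq V]
    (G : SimpleGraph V) (ε ρ ℓ r : ℝ) (n : ℕ)
    (hn : n = Fintype.card V) (hε : 0 < ε) (hερ : ε ≤ ρ ^ 2 / 2) (hℓ : ℓ ≥ 16)
    (hρn : ∃ m : ℕ, 0 < m ∧ (m : ℝ) = ρ * n)
    (hfar : FarFrom G ρ ε)
    (J : Finset V) (hJne : J.Nonempty)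
    (hJ : (edgesIn G J : ℝ) < ε / (ℓ * ρ ^ 2) * (J.card : ℝ) ^ 2)
    (C D : Finset V) (hCD : C ⊆ D)
    (hEC : (edgesIn G C : ℝ) ≤ ε * (n : ℝ) ^ 2 / 4)
    (hD : (D.card : ℝ) ≥ ρ * n)
    (hr : r > Real.sqrt ℓ / (16 * Real.logb 2 (8 * ρ / ε)))
    (hC : (C.card : ℝ) ≥ (1 - Real.sqrt ℓ / (16 * r * Real.logb 2 (8 * ρ / ε))) * (ρ * n))
    (hMRR : MRR G ε ρ ℓ J D ≤
      r * ((D.card : ℝ) - (1 - Real.sqrt ℓ / (16 * r * Real.logb 2 (8 * ρ / ε))) * (ρ * n))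
        / J.card) :
    ∀ Y : Finset V, Y ⊆ C →
      (Y.card : ℝ) = (1 - Real.sqrt ℓ / (16 * r * Real.logb 2 (8 * ρ / ε))) * (ρ * n) →
      (edgesIn G (D \ Y) : ℝ) ≤
        64 * (Real.logb 2 (8 * ρ / ε)) ^ 2 * ε * r ^ 2 / (ℓ * ρ ^ 2) *
          ((D \ Y).card : ℝ) ^ 2 :=
  sparse_outside_revision_general G ε ρ ℓ r n hn hε hερ hℓ hρn J hJne hJ C D hCD hD hr hMRR
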